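/- Let Δ ∈ F_q^(d × d') have rank strictly greater than r, and let f_1,...,f_r, g_1,...,g_r be any univariate polynomials over F_q of degrees less than d and d' respectively. Then for (x,y) uniform in F_q², the probability that P_Δ(x,y) = Σ_{k=1}^r f_k(x)·g_k(y) is at most (d + d' - 2)/q. -/

import Mathlib

/-!
Write `U` and `V` for the `d × r` and `d' × r` matrices of coefficients of the `f k` and the `g k`.
Then `∑ k, f k (x) * g k (y)` is the bivariate encoding of `U * Vᵀ`, a matrix of rank at most `r`,
so the event is the vanishing of the encoding `Q` of `M = Δ - U * Vᵀ ≠ 0`. Viewing `Q` as a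
polynomial in `Y` over `F[X]`, it has `Y`-degree at most `d' - 1` and a leading coefficient of
degree at most `d - 1`. Away from the zeros of that leading coefficient each fibre `Q(x, ·)` is a
nonzero polynomial with at most `d' - 1` roots, and the at most `d - 1` remaining fibres have at
most `q` points each: `Q` has at most `(d + d' - 2) q` zeros.
-/

open Polynomial Finset

namespace Polynomial

variable {R : Type*} [CommRing R] [IsDomain R] [Fintype R] [DecidableEq R]

theorem card_filter_eval_eq_zero_le {p : R[X]} (hp : p ≠ 0) :
    #{x | p.eval x = 0} ≤ p.natDegree :=
  card_le_degree_of_subset_roots fun x hx => by simpa [mem_roots hp] using hx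

theorem card_filter_evalEval_eq_zero_le {Q : R[X][X]} (hQ : Q ≠ 0) :
    #{z : R × R | Q.evalEval z.1 z.2 = 0}
      ≤ (Q.leadingCoeff.natDegree + Q.natDegree) * Fintype.card R := by
  set c := Q.leadingCoeff
  set q := Fintype.card R
  have fiber (x : R) :
      #{y | Q.evalEval x y = 0} ≤ (if c.eval x = 0 then q else 0) + Q.natDegree := by
    split_ifs with hx
    · exact (card_filter_le _ _).trans (Nat.le_add_right _ _)
    · have hQx : Q.map (evalRingHom x) ≠ 0 := fun h => hx <| by
        simpa [c] using congrArg (coeff · Q.natDegree) h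
      simp only [← map_evalRingHom_eval, zero_add]
      exact (card_filter_eval_eq_zero_le hQx).trans natDegree_map_le
  calc #{z : R × R | Q.evalEval z.1 z.2 = 0}
      = ∑ x, #{y | Q.evalEval x y = 0} := by
        simp only [card_filter, Fintype.sum_prod_type]
    _ ≤ ∑ x, ((if c.eval x = 0 then q else 0) + Q.natDegree) := sum_le_sum fun x _ => fiber x
    _ = #{x | c.eval x = 0} * q + q * Q.natDegree := by
        simp [sum_add_distrib, sum_ite, q]
    _ ≤ c.natDegree * q + q * Q.natDegree := by
        gcongr
        exact card_filter_eval_eq_zero_le (leadingCoeff_ne_zero.mpr hQ)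
    _ = (c.natDegree + Q.natDegree) * q := by ring

end Polynomial

namespace Matrix

section Encoding

variable {R : Type*} [CommSemiring R] {m n : ℕ}

/-- The polynomial `∑ i j, M i j X^i Y^j`, with `X` the variable of the coefficient ring `R[X]`
and `Y` the outer variable. -/
noncomputable def toBivariate (M : Matrix (Fin m) (Fin n) R) : R[X][X] :=
  ∑ i : Fin m, ∑ j : Fin n, C (monomial (i : ℕ) (M i j)) * X ^ (j : ℕ)

theorem coeff_coeff_toBivariate (M : Matrix (Fin m) (Fin n) R) (i : Fin m) (j : Fin n) :
    ((toBivariate M).coeff j).coeff i = M i j := by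
  simp [toBivariate, finsetSum_coeff, coeff_monomial, Fin.val_inj]

theorem toBivariate_ne_zero {M : Matrix (Fin m) (Fin n) R} (hM : M ≠ 0) : toBivariate M ≠ 0 :=
  fun h => hM <| ext fun i j => by simpa [h] using (coeff_coeff_toBivariate M i j).symm

theorem degree_toBivariate_lt (M : Matrix (Fin m) (Fin n) R) : (toBivariate M).degree < n := by
  unfold toBivariate
  refine mem_degreeLT.mp <| sum_mem fun i _ => sum_mem fun j _ => mem_degreeLT.mpr ?_
  exact (degree_C_mul_X_pow_le _ _).trans_lt (by exact_mod_cast j.2)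

theorem degree_coeff_toBivariate_lt (M : Matrix (Fin m) (Fin n) R) (k : ℕ) :
    ((toBivariate M).coeff k).degree < m := by
  simp only [toBivariate, finsetSum_coeff, coeff_C_mul_X_pow]
  refine mem_degreeLT.mp <| sum_mem fun i _ => sum_mem fun j _ => ?_
  split_ifs
  · exact mem_degreeLT.mpr <| (degree_monomial_le _ _).trans_lt (by exact_mod_cast i.2)
  · exact zero_mem _

theorem evalEval_toBivariate (M : Matrix (Fin m) (Fin n) R) (x y : R) :
    (toBivariate M).evalEval x y = ∑ i, ∑ j, M i j * x ^ (i : ℕ) * y ^ (j : ℕ) := by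
  simp only [toBivariate, evalEval_finsetSum, evalEval_mul, evalEval_C, evalEval_pow, evalEval_X,
    eval_monomial]

end Encoding

theorem card_filter_evalEval_toBivariate_eq_zero_le {R : Type*} [CommRing R] [IsDomain R]
    [Fintype R] [DecidableEq R] {m n : ℕ} {M : Matrix (Fin m) (Fin n) R} (hM : M ≠ 0) :
    #{z : R × R | (toBivariate M).evalEval z.1 z.2 = 0} ≤ (m + n - 2) * Fintype.card R := by
  have hQ := toBivariate_ne_zero hM
  have hY : (toBivariate M).natDegree < n :=
    (natDegree_lt_iff_degree_lt hQ).mpr (degree_toBivariate_lt M)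
  have hX : (toBivariate M).leadingCoeff.natDegree < m :=
    (natDegree_lt_iff_degree_lt (leadingCoeff_ne_zero.mpr hQ)).mpr
      (degree_coeff_toBivariate_lt M _)
  exact (card_filter_evalEval_eq_zero_le hQ).trans (Nat.mul_le_mul_right _ (by omega))

section CoeffMatrix

variable {R : Type*} [CommSemiring R] {m n r : ℕ}

def coeffMatrix (m : ℕ) (p : Fin r → R[X]) : Matrix (Fin m) (Fin r) R :=
  of fun i k => (p k).coeff i

theorem rank_coeffMatrix_mul_transpose_le [StrongRankCondition R] (f g : Fin r → R[X]) :
    (coeffMatrix m f * (coeffMatrix n g)ᵀ).rank ≤ r :=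
  (rank_mul_le_right _ _).trans (rank_le_height _)

theorem sum_eval_mul_eval_eq {f g : Fin r → R[X]} (hf : ∀ k, (f k).degree < m)
    (hg : ∀ k, (g k).degree < n) (x y : R) :
    ∑ k, (f k).eval x * (g k).eval y
      = ∑ i, ∑ j, (coeffMatrix m f * (coeffMatrix n g)ᵀ) i j * x ^ (i : ℕ) * y ^ (j : ℕ) := by
  simp only [eval_eq_sum_degreeLTEquiv (mem_degreeLT.mpr (hf _)),
    eval_eq_sum_degreeLTEquiv (mem_degreeLT.mpr (hg _)), sum_mul_sum]
  simp only [mul_apply, sum_mul]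
  conv_rhs => rw [sum_comm_cycle]
  refine sum_congr rfl fun k _ => sum_congr rfl fun i _ => sum_congr rfl fun j _ => ?_
  simp only [degreeLTEquiv, coeffMatrix, LinearEquiv.coe_mk, LinearMap.coe_mk, AddHom.coe_mk,
    transpose_apply, of_apply]
  ring

end CoeffMatrix

end Matrix

open Matrix in
/-- MRDP soundness: if `rank Δ > r`, then for any univariate polynomials
`f_k` (degree `< d`) and `g_k` (degree `< d'`), a uniform `(x,y) ∈ F_q²` satisfies
`P_Δ(x,y) = Σ_k f_k(x)·g_k(y)` with probability at most `(d + d' - 2)/q`. -/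
theorem stmt_9 (F : Type*) [Field F] [Fintype F] [DecidableEq F]
    (d d' r : ℕ) (Δ : Matrix (Fin d) (Fin d') F) (hr : r < Δ.rank)
    (f g : Fin r → Polynomial F)
    (hf : ∀ k, (f k).degree < d) (hg : ∀ k, (g k).degree < d') :
    ((Finset.univ.filter
        (fun p : F × F =>
          ∑ i : Fin d, ∑ j : Fin d', Δ i j * p.1 ^ (i : ℕ) * p.2 ^ (j : ℕ)
            = ∑ k : Fin r, (f k).eval p.1 * (g k).eval p.2)).card : ℝ)
      / (Fintype.card (F × F) : ℝ)
      ≤ ((d + d' - 2 : ℕ) : ℝ) / (Fintype.card F : ℝ) := by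
  set M := Δ - coeffMatrix d f * (coeffMatrix d' g)ᵀ
  have hM : M ≠ 0 := sub_ne_zero.mpr fun h =>
    (rank_coeffMatrix_mul_transpose_le f g).not_gt (h ▸ hr)
  have hzeros : Finset.univ.filter (fun p : F × F =>
        ∑ i : Fin d, ∑ j : Fin d', Δ i j * p.1 ^ (i : ℕ) * p.2 ^ (j : ℕ)
          = ∑ k : Fin r, (f k).eval p.1 * (g k).eval p.2)
      = Finset.univ.filter (fun z : F × F => (toBivariate M).evalEval z.1 z.2 = 0) := by
    refine filter_congr fun z _ => ?_
    simp [evalEval_toBivariate, sum_eval_mul_eval_eq hf hg, M, sub_mul, sub_eq_zero]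
  have hq : (0 : ℝ) < Fintype.card F := by exact_mod_cast Fintype.card_pos
  rw [hzeros, Fintype.card_prod, Nat.cast_mul, ← div_div, div_le_div_iff_of_pos_right hq,
    div_le_iff₀ hq]
  exact_mod_cast card_filter_evalEval_toBivariate_eq_zero_le hM
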